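/- arXiv:1305.1694 — 3 statements merged into one kernel-verified Lean document; each statement's English description precedes it below -/
import Mathlib

section
/- Let f : [0,1] → ℝ be continuous and positive such that t ↦ (1−t)/f(t) is nonincreasing on [0,1], and let F(x) = ∫₀ˣ (1−t)/f(t) dt. Let X be a finite index set with nonnegative weights w_u ≥ 0 for u ∈ X, let w_v ≥ 0, let y ∈ [0,1], and for each u ∈ X let y_u ∈ [0,1] with y_u ≤ y. If Σ_{u∈X} w_u (y − y_u) = w_v · f(y), then w_v (1 − y) ≤ Σ_{u∈X} w_u (F(y) − F(y_u)). -/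
/-! With `g t = (1 - t) / f t` nonincreasing, `F y - F y_u = ∫_{y_u}^y g ≥ (y - y_u) g(y)`.
Weighting by `w_u` and summing, the left side becomes `w_v f(y) g(y) = w_v (1 - y)`. -/

open Set intervalIntegral

lemma AntitoneOn.sub_mul_le_intervalIntegral {g : ℝ → ℝ} {a b : ℝ} (hab : a ≤ b)
    (hg : AntitoneOn g (Icc a b)) : (b - a) * g b ≤ ∫ t in a..b, g t := by
  have hb : b ∈ Icc a b := right_mem_Icc.mpr hab
  calc (b - a) * g b = ∫ _ in a..b, g b := by rw [integral_const, smul_eq_mul]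
    _ ≤ ∫ t in a..b, g t :=
      integral_mono_on hab intervalIntegrable_const
        (hg.mono (uIcc_subset_Icc (left_mem_Icc.mpr hab) hb)).intervalIntegrable
        fun t ht => hg ht hb ht.2

lemma AntitoneOn.sum_mul_le_sum_intervalIntegral {ι : Type*} {g : ℝ → ℝ} {a b : ℝ}
    (hg : AntitoneOn g (Icc a b)) (X : Finset ι) (w : ι → ℝ) (hw : ∀ u ∈ X, 0 ≤ w u)
    {y : ℝ} (hy : y ∈ Icc a b) (yu : ι → ℝ) (hyu : ∀ u ∈ X, yu u ∈ Icc a b)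
    (hle : ∀ u ∈ X, yu u ≤ y) :
    (∑ u ∈ X, w u * (y - yu u)) * g y ≤ ∑ u ∈ X, w u * ∫ t in yu u..y, g t := by
  rw [Finset.sum_mul]
  refine Finset.sum_le_sum fun u hu => ?_
  rw [mul_assoc]
  exact mul_le_mul_of_nonneg_left
    ((hg.mono (Icc_subset_Icc (hyu u hu).1 hy.2)).sub_mul_le_intervalIntegral (hle u hu))
    (hw u hu)

theorem weighted_charging_lemma_general {ι : Type*} (f : ℝ → ℝ)
    (hfpos : ∀ t ∈ Set.Icc (0:ℝ) 1, 0 < f t)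
    (hmono : ∀ s ∈ Set.Icc (0:ℝ) 1, ∀ t ∈ Set.Icc (0:ℝ) 1,
      s ≤ t → (1 - t) / f t ≤ (1 - s) / f s)
    (F : ℝ → ℝ) (hF : ∀ x, F x = ∫ t in (0:ℝ)..x, (1 - t) / f t)
    (X : Finset ι) (w : ι → ℝ) (hw : ∀ u ∈ X, 0 ≤ w u)
    (wv : ℝ)
    (y : ℝ) (hy : y ∈ Set.Icc (0:ℝ) 1)
    (yu : ι → ℝ) (hyu : ∀ u ∈ X, yu u ∈ Set.Icc (0:ℝ) 1)
    (hle : ∀ u ∈ X, yu u ≤ y)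
    (hsum : ∑ u ∈ X, w u * (y - yu u) = wv * f y) :
    wv * (1 - y) ≤ ∑ u ∈ X, w u * (F y - F (yu u)) := by
  set g : ℝ → ℝ := fun t => (1 - t) / f t
  have hg : AntitoneOn g (Icc 0 1) := hmono
  have hg_int : ∀ x ∈ Icc (0:ℝ) 1, IntervalIntegrable g MeasureTheory.volume 0 x :=
    fun x hx => (hg.mono (uIcc_subset_Icc (left_mem_Icc.mpr zero_le_one) hx)).intervalIntegrable
  have hF_sub : ∀ x ∈ Icc (0:ℝ) 1, F y - F x = ∫ t in x..y, g t := fun x hx => by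
    rw [hF, hF]
    exact integral_interval_sub_left (hg_int y hy) (hg_int x hx)
  calc wv * (1 - y) = wv * f y * ((1 - y) / f y) := by
        have := (hfpos y hy).ne'
        field_simp
    _ = (∑ u ∈ X, w u * (y - yu u)) * g y := by rw [hsum]
    _ ≤ ∑ u ∈ X, w u * ∫ t in yu u..y, g t :=
        hg.sum_mul_le_sum_intervalIntegral X w hw hy yu hyu hle
    _ = ∑ u ∈ X, w u * (F y - F (yu u)) :=
        Finset.sum_congr rfl fun u hu => by rw [hF_sub (yu u) (hyu u hu)]

/-- Weighted charging lemma: if `f` is continuous and positive on `[0,1]`,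
`t ↦ (1-t)/f t` is nonincreasing on `[0,1]`, `F x = ∫₀ˣ (1-t)/f t dt`,
weights `w_u ≥ 0` and `w_v ≥ 0`, and `Σ_{u ∈ X} w_u (y - y_u) = w_v · f y`
with all `y_u ≤ y` in `[0,1]`, then `w_v (1 - y) ≤ Σ_{u ∈ X} w_u (F y - F y_u)`. -/
theorem weighted_charging_lemma {ι : Type*} (f : ℝ → ℝ)
    (hfc : ContinuousOn f (Set.Icc 0 1))
    (hfpos : ∀ t ∈ Set.Icc (0:ℝ) 1, 0 < f t)
    (hmono : ∀ s ∈ Set.Icc (0:ℝ) 1, ∀ t ∈ Set.Icc (0:ℝ) 1,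
      s ≤ t → (1 - t) / f t ≤ (1 - s) / f s)
    (F : ℝ → ℝ) (hF : ∀ x, F x = ∫ t in (0:ℝ)..x, (1 - t) / f t)
    (X : Finset ι) (w : ι → ℝ) (hw : ∀ u ∈ X, 0 ≤ w u)
    (wv : ℝ) (hwv : 0 ≤ wv)
    (y : ℝ) (hy : y ∈ Set.Icc (0:ℝ) 1)
    (yu : ι → ℝ) (hyu : ∀ u ∈ X, yu u ∈ Set.Icc (0:ℝ) 1)
    (hle : ∀ u ∈ X, yu u ≤ y)
    (hsum : ∑ u ∈ X, w u * (y - yu u) = wv * f y) :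
    wv * (1 - y) ≤ ∑ u ∈ X, w u * (F y - F (yu u)) :=
  weighted_charging_lemma_general f hfpos hmono F hF X w hw wv y hy yu hyu hle hsum
end

section
/- Let k > 1 and define f_k(z) = ((1+k)/2 − z)^((1+k)/(2k)) · (z + (k−1)/2)^((k−1)/(2k)) for z ∈ [0,1]. Then the function z ↦ f_k(1−z) + ∫_z^1 (1−t)/f_k(t) dt is constant on [0,1]; in particular, for every z ∈ [0,1], f_k(1−z) + ∫_z^1 (1−t)/f_k(t) dt = f_k(0). -/
/-!
Writing `f_k z = (A - z)^a (z + B)^b` with `A = (1+k)/2`, `B = (k-1)/2`, `a = A/k`, `b = B/k`, one has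
`A - B = 1` and `a + b = 1`, so `f_k (1 - z) = (z + B)^a (A - z)^b`, and `aA - bB = 1` makes the
derivative of this reflected function equal to `(1 - z) / f_k z`. The theorem is then the fundamental
theorem of calculus on `[z, 1]`, which lies inside the domain `(-B, A)` where both bases are positive.
-/

open Real Set

noncomputable def fk (k z : ℝ) : ℝ :=
  ((1 + k) / 2 - z) ^ ((1 + k) / (2 * k)) * (z + (k - 1) / 2) ^ ((k - 1) / (2 * k))

theorem hasDerivAt_sub_rpow_mul_add_rpow {A B a b x : ℝ} (hA : 0 < A - x) (hB : 0 < x + B) :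
    HasDerivAt (fun y => (A - y) ^ a * (y + B) ^ b)
      ((A - x) ^ (a - 1) * (x + B) ^ (b - 1) * (b * (A - x) - a * (x + B))) x := by
  have hA' := ((hasDerivAt_id x).const_sub A).rpow_const (p := a) (Or.inl hA.ne')
  have hB' := ((hasDerivAt_id x).add_const B).rpow_const (p := b) (Or.inl hB.ne')
  refine (hA'.mul hB').congr_deriv ?_
  simp only [id, rpow_sub_one hA.ne', rpow_sub_one hB.ne']
  field_simp
  ring

section
variable {k x : ℝ}

theorem fk_pos (hA : 0 < (1 + k) / 2 - x) (hB : 0 < x + (k - 1) / 2) : 0 < fk k x :=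
  mul_pos (rpow_pos_of_pos hA _) (rpow_pos_of_pos hB _)

theorem continuousAt_fk (hA : 0 < (1 + k) / 2 - x) (hB : 0 < x + (k - 1) / 2) :
    ContinuousAt (fk k) x :=
  (hasDerivAt_sub_rpow_mul_add_rpow hA hB).continuousAt

theorem hasDerivAt_fk_one_sub (hA : 0 < (1 + k) / 2 - x) (hB : 0 < x + (k - 1) / 2) :
    HasDerivAt (fun y => fk k (1 - y)) ((1 - x) / fk k x) x := by
  have hk : k ≠ 0 := by linarith
  have hA' : 0 < (1 + k) / 2 - (1 - x) := by linarith
  have hB' : 0 < (1 - x) + (k - 1) / 2 := by linarith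
  refine ((hasDerivAt_sub_rpow_mul_add_rpow (a := (1 + k) / (2 * k)) (b := (k - 1) / (2 * k))
    hA' hB').comp x ((hasDerivAt_id x).const_sub 1)).congr_deriv ?_
  have ha : (1 + k) / (2 * k) - 1 = -((k - 1) / (2 * k)) := by field_simp; ring
  have hb : (k - 1) / (2 * k) - 1 = -((1 + k) / (2 * k)) := by field_simp; ring
  rw [show (1 + k) / 2 - (1 - x) = x + (k - 1) / 2 by ring,
    show 1 - x + (k - 1) / 2 = (1 + k) / 2 - x by ring, ha, hb, rpow_neg hB.le, rpow_neg hA.le, fk]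
  field_simp
  ring
end

/-- For `k > 1` and
`f_k z = ((1+k)/2 - z)^((1+k)/(2k)) · (z + (k-1)/2)^((k-1)/(2k))`,
the expression `f_k (1-z) + ∫_z^1 (1-t)/f_k t dt` is constant on `[0,1]`,
equal to its value `f_k 0` at `z = 1`. -/
theorem fk_constant_ratio (k : ℝ) (hk : 1 < k) (f : ℝ → ℝ)
    (hf : ∀ z, f z = ((1 + k) / 2 - z) ^ ((1 + k) / (2 * k)) *
                     (z + (k - 1) / 2) ^ ((k - 1) / (2 * k))) :
    ∀ z ∈ Set.Icc (0:ℝ) 1, f (1 - z) + (∫ t in z..1, (1 - t) / f t) = f 0 := by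
  obtain rfl : f = fk k := funext hf
  rintro z ⟨hz0, hz1⟩
  have hdom : ∀ x ∈ uIcc z 1, 0 < (1 + k) / 2 - x ∧ 0 < x + (k - 1) / 2 := by
    intro x hx
    rw [uIcc_of_le hz1] at hx
    constructor <;> linarith [hx.1, hx.2]
  have hcont : ContinuousOn (fun t => (1 - t) / fk k t) (uIcc z 1) := fun x hx =>
    (continuousAt_const.sub continuousAt_id |>.div (continuousAt_fk (hdom x hx).1 (hdom x hx).2)
      (fk_pos (hdom x hx).1 (hdom x hx).2).ne').continuousWithinAt
  rw [intervalIntegral.integral_eq_sub_of_hasDerivAt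
    (fun x hx => hasDerivAt_fk_one_sub (hdom x hx).1 (hdom x hx).2) hcont.intervalIntegrable]
  simp
end

section
/- Let f : [0,1] → ℝ be continuous and positive with t ↦ (1−t)/f(t) nonincreasing on [0,1], and set β = sup_{z∈[0,1]} ( 1 + f(1−z) + ∫_z^1 (1−t)/f(t) dt ). Let G = (V,E) be any finite simple graph with any arrival order v_1, …, v_n of its vertices, and run GreedyAllocation with allocation function f, producing final potentials y : V → [0,1]. Then y is a fractional vertex cover of G, and for every fractional vertex cover y* of G, Σ_{v∈V} y_v ≤ β · Σ_{v∈V} y*_v. -/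
/-!
Primal-dual charging. When vertex `i` arrives at water level `w`, the potentials grow by
`(1 - w) + A`, where `A ≤ f w` is the cost of raising the earlier neighbors to `w`, with equality
unless `w = 1`; charging `max (w - y j) 0 * (1 + (1 - w) / f w)` to each edge `j i` therefore pays
for this growth. A vertex `v` arriving at level `w` is charged at most `f w + (1 - w)` as the later
endpoint of its edges and, because `(1 - t) / f t` is nonincreasing, at most
`∫ t in 1 - w..1, 1 + (1 - t) / f t` as the earlier endpoint, since its potential only climbs from
`1 - w` towards `1`. Taking `z = 1 - w`, every vertex carries load at most `β`, and weighting the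
charges by a fractional vertex cover bounds their total by `β * ∑ v, ystar v`.
-/

open Finset

/-- The water level chosen by `GreedyAllocation` with allocation function `f`:
the supremum of `t ∈ [0,1]` such that raising all potentials in `S` up to `t`
costs at most `f t`. -/
noncomputable def waterLevel {ι : Type*} (f : ℝ → ℝ) (S : Finset ι) (y : ι → ℝ) : ℝ :=
  sSup {t ∈ Set.Icc (0:ℝ) 1 | ∑ u ∈ S, max (t - y u) 0 ≤ f t}

/-- The previously arrived neighbors of vertex `i` (vertices arrive in the
order `0, 1, …, n-1`; `E` is the adjacency predicate of the graph). -/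
def neighborsBefore {n : ℕ} (E : Fin n → Fin n → Bool) (i : Fin n) : Finset (Fin n) :=
  Finset.univ.filter fun j => j < i ∧ E j i = true

/-- Potentials maintained by `GreedyAllocation` with allocation function `f`
after `i` vertices have been processed. When vertex `i` arrives, the water
level `w` is computed over its previously arrived neighbors; each such
neighbor's potential is raised to at least `w`, and vertex `i` receives
potential `1 - w`. -/
noncomputable def greedyPotential (f : ℝ → ℝ) {n : ℕ} (E : Fin n → Fin n → Bool) :
    ℕ → Fin n → ℝ
  | 0 => fun _ => 0
  | (i + 1) => fun v =>
      if h : i < n then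
        let vi : Fin n := ⟨i, h⟩
        let w := waterLevel f (neighborsBefore E vi) (greedyPotential f E i)
        if v = vi then 1 - w
        else if v ∈ neighborsBefore E vi then max (greedyPotential f E i v) w
        else greedyPotential f E i v
      else greedyPotential f E i v

/-- The water level used when processing vertex `i`. -/
noncomputable def stepLevel (f : ℝ → ℝ) {n : ℕ} (E : Fin n → Fin n → Bool) (i : Fin n) : ℝ :=
  waterLevel f (neighborsBefore E i) (greedyPotential f E i.val)

/-- The edge values set by the `PrimalDual` algorithm: when vertex `i` arrives,
for each previously arrived neighbor `j` the edge `(j,i)` receives value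
`(max(w_i - y_j, 0)/β)·(1 + (1 - w_i)/f(w_i))`, using the potentials before
updating; all other pairs get `0`. -/
noncomputable def pdEdge (f : ℝ → ℝ) (β : ℝ) {n : ℕ} (E : Fin n → Fin n → Bool)
    (j i : Fin n) : ℝ :=
  if j < i ∧ E j i = true then
    (max (stepLevel f E i - greedyPotential f E i.val j) 0 / β) *
      (1 + (1 - stepLevel f E i) / f (stepLevel f E i))
  else 0

open Topology Filter

theorem sum_sum_le_mul_sum_of_cover {ι : Type*} [Fintype ι] {x : ι → ι → ℝ} {c : ι → ℝ}
    {β : ℝ} (hx : ∀ i j, 0 ≤ x i j) (hc : ∀ v, 0 ≤ c v)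
    (hcover : ∀ i j, x i j ≠ 0 → 1 ≤ c i + c j) (hload : ∀ v, ∑ u, x v u + ∑ u, x u v ≤ β) :
    ∑ i, ∑ j, x i j ≤ β * ∑ v, c v := by
  calc ∑ i, ∑ j, x i j ≤ ∑ i, ∑ j, x i j * (c i + c j) := by
        refine sum_le_sum fun i _ => sum_le_sum fun j _ => ?_
        by_cases h : x i j = 0
        · simp [h]
        · exact le_mul_of_one_le_right (hx i j) (hcover i j h)
    _ = ∑ v, c v * (∑ u, x v u + ∑ u, x u v) := by
        simp only [mul_add, sum_add_distrib, mul_sum]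
        rw [sum_comm (f := fun i j => x i j * c j)]
        congr 1 <;> exact sum_congr rfl fun _ _ => sum_congr rfl fun _ _ => mul_comm _ _
    _ ≤ ∑ v, c v * β := sum_le_sum fun v _ => mul_le_mul_of_nonneg_left (hload v) (hc v)
    _ = β * ∑ v, c v := by rw [← sum_mul, mul_comm]

noncomputable def fillCost {ι : Type*} (S : Finset ι) (y : ι → ℝ) (t : ℝ) : ℝ :=
  ∑ u ∈ S, max (t - y u) 0

lemma continuous_fillCost {ι : Type*} (S : Finset ι) (y : ι → ℝ) : Continuous (fillCost S y) :=
  continuous_finsetSum _ fun _ _ => (continuous_id.sub continuous_const).max continuous_const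

lemma waterLevel_mem_Icc {ι : Type*} (f : ℝ → ℝ) (S : Finset ι) (y : ι → ℝ) :
    waterLevel f S y ∈ Set.Icc (0:ℝ) 1 :=
  ⟨Real.sSup_nonneg fun _ ht => ht.1.1, Real.sSup_le (fun _ ht => ht.1.2) zero_le_one⟩

section WaterLevel

variable {ι : Type*} {f : ℝ → ℝ} {S : Finset ι} {y : ι → ℝ}

lemma fillCost_waterLevel_le (hfc : ContinuousOn f (Set.Icc 0 1))
    (hfpos : ∀ t ∈ Set.Icc (0:ℝ) 1, 0 < f t) (hy : ∀ u ∈ S, 0 ≤ y u) :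
    fillCost S y (waterLevel f S y) ≤ f (waterLevel f S y) := by
  have hzero : fillCost S y 0 = 0 :=
    sum_eq_zero fun u hu => max_eq_right (by linarith [hy u hu])
  have hclosed : IsClosed {t ∈ Set.Icc (0:ℝ) 1 | fillCost S y t ≤ f t} :=
    isClosed_Icc.isClosed_le (continuous_fillCost S y).continuousOn hfc
  have h0 : (0:ℝ) ∈ {t ∈ Set.Icc (0:ℝ) 1 | fillCost S y t ≤ f t} :=
    ⟨Set.left_mem_Icc.2 zero_le_one, hzero.le.trans (hfpos 0 (Set.left_mem_Icc.2 zero_le_one)).le⟩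
  exact (hclosed.csSup_mem ⟨0, h0⟩ ⟨1, fun _ ht => ht.1.2⟩).2

lemma fillCost_waterLevel_eq (hfc : ContinuousOn f (Set.Icc 0 1))
    (hfpos : ∀ t ∈ Set.Icc (0:ℝ) 1, 0 < f t) (hy : ∀ u ∈ S, 0 ≤ y u)
    (hlt : waterLevel f S y < 1) :
    fillCost S y (waterLevel f S y) = f (waterLevel f S y) := by
  refine le_antisymm (fillCost_waterLevel_le hfc hfpos hy) (not_lt.1 fun hgap => ?_)
  set w := waterLevel f S y
  have hw := waterLevel_mem_Icc f S y
  -- the slack persists slightly to the right of `w`, contradicting maximality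
  have hslack : ∀ᶠ t in 𝓝[Set.Icc 0 1] w, fillCost S y t < f t :=
    ((continuous_fillCost S y).continuousWithinAt).eventually_lt (hfc w hw) hgap
  have : (𝓝[Set.Ioo w 1] w).NeBot := left_nhdsWithin_Ioo_neBot hlt
  have hsub : Set.Ioo w 1 ⊆ Set.Icc 0 1 := fun t ht => ⟨hw.1.trans ht.1.le, ht.2.le⟩
  obtain ⟨t, hts, htw⟩ :=
    ((hslack.filter_mono (nhdsWithin_mono _ hsub)).and self_mem_nhdsWithin).exists
  have htw' : t ≤ w := le_csSup (s := {t ∈ Set.Icc (0:ℝ) 1 | fillCost S y t ≤ f t})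
    ⟨1, fun _ ht => ht.1.2⟩ ⟨hsub htw, hts.le⟩
  exact htw'.not_gt htw.1

end WaterLevel

section Greedy

variable (f : ℝ → ℝ) {n : ℕ} (E : Fin n → Fin n → Bool)

lemma greedyPotential_succ (i v : Fin n) :
    greedyPotential f E (i + 1) v =
      if v = i then 1 - stepLevel f E i
      else if v ∈ neighborsBefore E i then max (greedyPotential f E i v) (stepLevel f E i)
      else greedyPotential f E i v := by
  simp [greedyPotential, stepLevel]

lemma stepLevel_mem_Icc (i : Fin n) : stepLevel f E i ∈ Set.Icc (0:ℝ) 1 :=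
  waterLevel_mem_Icc f _ _

lemma greedyPotential_succ_of_le {m : ℕ} (hm : n ≤ m) :
    greedyPotential f E (m + 1) = greedyPotential f E m := by
  funext v
  simp [greedyPotential, not_lt.2 hm]

lemma not_mem_neighborsBefore_of_le {i v : Fin n} (h : i ≤ v) : v ∉ neighborsBefore E i := by
  simp [neighborsBefore, not_lt.2 h]

lemma greedyPotential_eq_zero_of_le {m : ℕ} {v : Fin n} (hm : m ≤ v) :
    greedyPotential f E m v = 0 := by
  induction m with
  | zero => rfl
  | succ m ih =>
    obtain ⟨i, rfl⟩ : ∃ i : Fin n, (i : ℕ) = m := ⟨⟨m, by omega⟩, rfl⟩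
    have hiv : i < v := by omega
    rw [greedyPotential_succ, if_neg hiv.ne', if_neg (not_mem_neighborsBefore_of_le E hiv.le),
      ih hiv.le]

lemma greedyPotential_mem_Icc (m : ℕ) (v : Fin n) :
    greedyPotential f E m v ∈ Set.Icc (0:ℝ) 1 := by
  induction m generalizing v with
  | zero => exact Set.left_mem_Icc.2 zero_le_one
  | succ m ih =>
    rcases lt_or_ge m n with hm | hm
    · obtain ⟨i, rfl⟩ : ∃ i : Fin n, (i : ℕ) = m := ⟨⟨m, hm⟩, rfl⟩
      have hw := stepLevel_mem_Icc f E i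
      rw [greedyPotential_succ]
      split_ifs
      · exact ⟨by linarith [hw.2], by linarith [hw.1]⟩
      · exact ⟨(ih v).1.trans (le_max_left _ _), max_le (ih v).2 hw.2⟩
      · exact ih v
    · rw [greedyPotential_succ_of_le f E hm]
      exact ih v

lemma greedyPotential_monotone (v : Fin n) : Monotone fun m => greedyPotential f E m v := by
  refine monotone_nat_of_le_succ fun m => ?_
  rcases lt_or_ge m n with hm | hm
  · obtain ⟨i, rfl⟩ : ∃ i : Fin n, (i : ℕ) = m := ⟨⟨m, hm⟩, rfl⟩
    rw [greedyPotential_succ]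
    split_ifs with hvi
    · rw [hvi, greedyPotential_eq_zero_of_le f E le_rfl]
      linarith [(stepLevel_mem_Icc f E i).2]
    · exact le_max_left _ _
    · exact le_rfl
  · rw [greedyPotential_succ_of_le f E hm]

lemma one_sub_stepLevel_le_greedyPotential (i : Fin n) :
    1 - stepLevel f E i ≤ greedyPotential f E n i := by
  have h := greedyPotential_monotone f E i (Nat.succ_le_of_lt i.isLt)
  simpa [greedyPotential_succ] using h

lemma stepLevel_le_greedyPotential {i j : Fin n} (hj : j ∈ neighborsBefore E i) :
    stepLevel f E i ≤ greedyPotential f E n j := by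
  have h := greedyPotential_monotone f E j (Nat.succ_le_of_lt i.isLt)
  have hji : j ≠ i := fun h => not_mem_neighborsBefore_of_le E h.ge hj
  simp only [greedyPotential_succ, if_neg hji, if_pos hj] at h
  exact (le_max_right _ _).trans h

lemma one_le_greedyPotential_add (hsymm : ∀ i j, E i j = E j i) (hloop : ∀ i, E i i = false)
    {i j : Fin n} (hij : E i j = true) :
    1 ≤ greedyPotential f E n i + greedyPotential f E n j := by
  have key : ∀ i j : Fin n, j ∈ neighborsBefore E i →
      1 ≤ greedyPotential f E n i + greedyPotential f E n j := fun i j hj => by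
    linarith [one_sub_stepLevel_le_greedyPotential f E i, stepLevel_le_greedyPotential f E hj]
  rcases lt_trichotomy i j with h | rfl | h
  · rw [add_comm]
    exact key j i (by simp [neighborsBefore, h, hij])
  · simp [hloop] at hij
  · exact key i j (by simp [neighborsBefore, h, hsymm j i, hij])

end Greedy

lemma rate_nonneg {f : ℝ → ℝ} (hfpos : ∀ t ∈ Set.Icc (0:ℝ) 1, 0 < f t) {t : ℝ}
    (ht : t ∈ Set.Icc (0:ℝ) 1) : 0 ≤ (1 - t) / f t :=
  div_nonneg (sub_nonneg.2 ht.2) (hfpos t ht).le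

noncomputable def stepCost (f : ℝ → ℝ) {n : ℕ} (E : Fin n → Fin n → Bool) (i : Fin n) : ℝ :=
  fillCost (neighborsBefore E i) (greedyPotential f E i) (stepLevel f E i)

/-- `β * pdEdge f β E j i`: the dual edge variables of the primal-dual analysis, unscaled. -/
noncomputable def charge (f : ℝ → ℝ) {n : ℕ} (E : Fin n → Fin n → Bool) (j i : Fin n) : ℝ :=
  if j ∈ neighborsBefore E i then
    max (stepLevel f E i - greedyPotential f E i j) 0 *
      (1 + (1 - stepLevel f E i) / f (stepLevel f E i))
  else 0

section Charging

variable (f : ℝ → ℝ) {n : ℕ} (E : Fin n → Fin n → Bool)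

lemma sum_charge_left (i : Fin n) :
    ∑ j, charge f E j i = stepCost f E i * (1 + (1 - stepLevel f E i) / f (stepLevel f E i)) := by
  simp [charge, stepCost, fillCost, sum_mul, sum_ite_mem]

lemma charge_nonneg (hfpos : ∀ t ∈ Set.Icc (0:ℝ) 1, 0 < f t) (j i : Fin n) :
    0 ≤ charge f E j i := by
  have hw := stepLevel_mem_Icc f E i
  unfold charge
  split_ifs
  · exact mul_nonneg (le_max_right _ _) (by linarith [rate_nonneg hfpos hw])
  · exact le_rfl

lemma adj_of_charge_ne_zero {j i : Fin n} (h : charge f E j i ≠ 0) : E j i = true := by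
  by_contra hE
  simp [charge, neighborsBefore, hE] at h

lemma sum_greedyPotential_succ (i : Fin n) :
    ∑ v, greedyPotential f E (i + 1) v =
      ∑ v, greedyPotential f E i v + (1 - stepLevel f E i) + stepCost f E i := by
  set w := stepLevel f E i
  have hpointwise : ∀ v, greedyPotential f E (i + 1) v = greedyPotential f E i v +
      ((if v = i then 1 - w else 0) +
        if v ∈ neighborsBefore E i then max (w - greedyPotential f E i v) 0 else 0) := by
    intro v
    rw [greedyPotential_succ]
    split_ifs with hvi hv hv
    · exact absurd hv (hvi ▸ not_mem_neighborsBefore_of_le E le_rfl)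
    · rw [hvi, greedyPotential_eq_zero_of_le f E le_rfl]
      ring
    · rcases le_total (greedyPotential f E i v) w with h | h
      · rw [max_eq_right h, max_eq_left (sub_nonneg.2 h)]
        ring
      · rw [max_eq_left h, max_eq_right (sub_nonpos.2 h)]
        ring
    · ring
  rw [sum_congr rfl fun v _ => hpointwise v, sum_add_distrib, sum_add_distrib, sum_ite_eq',
    if_pos (mem_univ i), sum_ite_mem, univ_inter, add_assoc]
  rfl

variable (hfc : ContinuousOn f (Set.Icc 0 1)) (hfpos : ∀ t ∈ Set.Icc (0:ℝ) 1, 0 < f t)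
include hfc hfpos

lemma stepCost_le (i : Fin n) : stepCost f E i ≤ f (stepLevel f E i) :=
  fillCost_waterLevel_le hfc hfpos fun u _ => (greedyPotential_mem_Icc f E i u).1

lemma stepCost_eq (i : Fin n) (h : stepLevel f E i < 1) : stepCost f E i = f (stepLevel f E i) :=
  fillCost_waterLevel_eq hfc hfpos (fun u _ => (greedyPotential_mem_Icc f E i u).1) h

lemma one_sub_stepLevel_add_stepCost_le (i : Fin n) :
    1 - stepLevel f E i + stepCost f E i ≤
      stepCost f E i * (1 + (1 - stepLevel f E i) / f (stepLevel f E i)) := by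
  have hw := stepLevel_mem_Icc f E i
  have hfw := hfpos _ hw
  rcases hw.2.eq_or_lt with h | h
  · simp [h]
  · rw [stepCost_eq f E hfc hfpos i h, mul_add, mul_div_cancel₀ _ hfw.ne']
    linarith

lemma sum_greedyPotential_le_sum_charge :
    ∑ v, greedyPotential f E n v ≤ ∑ j, ∑ i, charge f E j i := by
  let total : ℕ → ℝ := fun m => ∑ v, greedyPotential f E m v
  have htelescope : ∑ v, greedyPotential f E n v = ∑ i : Fin n, (total (i + 1) - total i) := by
    rw [Fin.sum_univ_eq_sum_range (fun m => total (m + 1) - total m), sum_range_sub]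
    simp [total, greedyPotential]
  rw [htelescope, sum_comm]
  refine sum_le_sum fun i _ => ?_
  rw [sum_charge_left]
  linarith [sum_greedyPotential_succ f E i, one_sub_stepLevel_add_stepCost_le f E hfc hfpos i]

end Charging

section Dual

variable {f : ℝ → ℝ} (hfc : ContinuousOn f (Set.Icc 0 1))
  (hfpos : ∀ t ∈ Set.Icc (0:ℝ) 1, 0 < f t)
include hfc hfpos

lemma intervalIntegrable_rate {a b : ℝ} (ha : a ∈ Set.Icc (0:ℝ) 1) (hb : b ∈ Set.Icc (0:ℝ) 1) :
    IntervalIntegrable (fun t => (1 - t) / f t) MeasureTheory.volume a b :=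
  (((continuousOn_const.sub continuousOn_id).div hfc fun t ht => (hfpos t ht).ne').mono
    (Set.uIcc_subset_Icc ha hb)).intervalIntegrable

lemma bddAbove_range_ratio :
    BddAbove (Set.range fun z : Set.Icc (0:ℝ) 1 =>
      1 + f (1 - (z : ℝ)) + ∫ t in (z : ℝ)..1, (1 - t) / f t) := by
  obtain ⟨M, hM⟩ := isCompact_Icc.bddAbove_image hfc
  refine ⟨1 + M + ∫ t in (0:ℝ)..1, (1 - t) / f t, ?_⟩
  rintro _ ⟨⟨z, hz⟩, rfl⟩
  have hf : f (1 - z) ≤ M := hM ⟨1 - z, ⟨by linarith [hz.2], by linarith [hz.1]⟩, rfl⟩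
  have hint : ∫ t in z..1, (1 - t) / f t ≤ ∫ t in (0:ℝ)..1, (1 - t) / f t :=
    intervalIntegral.integral_mono_interval hz.1 hz.2 le_rfl
      (MeasureTheory.ae_restrict_of_forall_mem measurableSet_Ioc
        fun t ht => rate_nonneg hfpos (Set.Ioc_subset_Icc_self ht))
      (intervalIntegrable_rate hfc hfpos (Set.left_mem_Icc.2 zero_le_one)
        (Set.right_mem_Icc.2 zero_le_one))
  dsimp only
  linarith

variable {n : ℕ} (E : Fin n → Fin n → Bool)
  (hmono : ∀ s ∈ Set.Icc (0:ℝ) 1, ∀ t ∈ Set.Icc (0:ℝ) 1, s ≤ t → (1 - t) / f t ≤ (1 - s) / f s)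
include hmono

lemma charge_le_integral {v u : Fin n} (hvu : v ≠ u) :
    charge f E v u ≤
      ∫ t in greedyPotential f E u v..greedyPotential f E (u + 1) v, 1 + (1 - t) / f t := by
  have ha := greedyPotential_mem_Icc f E u v
  have hw := stepLevel_mem_Icc f E u
  rw [charge, greedyPotential_succ, if_neg hvu]
  split_ifs
  · set a := greedyPotential f E u v
    set w := stepLevel f E u
    rcases le_total w a with h | h
    · simp [max_eq_left h, sub_nonpos.2 h]
    · rw [max_eq_right h, max_eq_left (sub_nonneg.2 h)]
      -- `(1 - t) / f t` is nonincreasing, so the rectangle lies below the graph on `[a, w]`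
      calc (w - a) * (1 + (1 - w) / f w) = ∫ _ in a..w, 1 + (1 - w) / f w := by
            rw [intervalIntegral.integral_const, smul_eq_mul]
        _ ≤ ∫ t in a..w, 1 + (1 - t) / f t :=
          intervalIntegral.integral_mono_on h intervalIntegrable_const
            (intervalIntegrable_const.add (intervalIntegrable_rate hfc hfpos ha hw))
            fun t ht => by
              have := hmono t ⟨ha.1.trans ht.1, ht.2.trans hw.2⟩ w hw ht.2
              linarith
  · simp

lemma sum_charge_right_le (v : Fin n) :
    ∑ u, charge f E v u ≤ ∫ t in (1 - stepLevel f E v)..1, 1 + (1 - t) / f t := by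
  let y : ℕ → ℝ := fun m => greedyPotential f E m v
  let I : ℕ → ℝ := fun m => ∫ t in y m..y (m + 1), 1 + (1 - t) / f t
  have hint : ∀ {a b : ℝ}, a ∈ Set.Icc (0:ℝ) 1 → b ∈ Set.Icc (0:ℝ) 1 →
      IntervalIntegrable (fun t => 1 + (1 - t) / f t) MeasureTheory.volume a b :=
    fun ha hb => intervalIntegrable_const.add (intervalIntegrable_rate hfc hfpos ha hb)
  have hw : 1 - stepLevel f E v ∈ Set.Icc (0:ℝ) 1 := by
    have := stepLevel_mem_Icc f E v
    constructor <;> linarith [this.1, this.2]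
  have hy : ∀ m, y m ∈ Set.Icc (0:ℝ) 1 := fun m => greedyPotential_mem_Icc f E m v
  have htotal : ∑ u : Fin n, I u = ∫ t in y 0..y n, 1 + (1 - t) / f t := by
    rw [Fin.sum_univ_eq_sum_range I n,
      intervalIntegral.sum_integral_adjacent_intervals fun k _ => hint (hy k) (hy (k + 1))]
  have harrival : I v = ∫ t in y 0..(1 - stepLevel f E v), 1 + (1 - t) / f t := by
    simp [I, y, greedyPotential_succ, greedyPotential_eq_zero_of_le]
  have hzero : charge f E v v = 0 := by simp [charge, not_mem_neighborsBefore_of_le E le_rfl]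
  calc ∑ u, charge f E v u = ∑ u ∈ univ.erase v, charge f E v u := (sum_erase _ hzero).symm
    _ ≤ ∑ u ∈ univ.erase v, I u :=
      sum_le_sum fun u hu => charge_le_integral hfc hfpos E hmono (ne_of_mem_erase hu).symm
    _ = ∫ t in (1 - stepLevel f E v)..y n, 1 + (1 - t) / f t := by
      rw [← intervalIntegral.integral_interval_sub_left (hint (hy 0) (hy n)) (hint (hy 0) hw),
        ← htotal, ← harrival, ← add_sum_erase _ _ (mem_univ v), add_sub_cancel_left]
    _ ≤ ∫ t in (1 - stepLevel f E v)..1, 1 + (1 - t) / f t :=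
      intervalIntegral.integral_mono_interval le_rfl
        (one_sub_stepLevel_le_greedyPotential f E v) (hy n).2
        (MeasureTheory.ae_restrict_of_forall_mem measurableSet_Ioc fun t ht => by
          show (0:ℝ) ≤ 1 + (1 - t) / f t
          linarith [rate_nonneg hfpos ⟨hw.1.trans ht.1.le, ht.2⟩])
        (hint hw (Set.right_mem_Icc.2 zero_le_one))

lemma charge_load_le (v : Fin n) :
    ∑ u, charge f E v u + ∑ u, charge f E u v ≤
      ⨆ z : Set.Icc (0:ℝ) 1, (1 + f (1 - (z : ℝ)) + ∫ t in (z : ℝ)..1, (1 - t) / f t) := by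
  set w := stepLevel f E v
  have hw := stepLevel_mem_Icc f E v
  have h1w : 1 - w ∈ Set.Icc (0:ℝ) 1 := ⟨by linarith [hw.2], by linarith [hw.1]⟩
  have hrow : ∑ u, charge f E v u ≤ w + ∫ t in (1 - w)..1, (1 - t) / f t := by
    have h := sum_charge_right_le hfc hfpos E hmono v
    rwa [intervalIntegral.integral_add intervalIntegrable_const
      (intervalIntegrable_rate hfc hfpos h1w (Set.right_mem_Icc.2 zero_le_one)),
      intervalIntegral.integral_const, smul_eq_mul, mul_one, sub_sub_cancel] at h
  have hcol : ∑ u, charge f E u v ≤ f w + (1 - w) := by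
    rw [sum_charge_left, mul_add, mul_one]
    have hfw := hfpos w hw
    have hcost := stepCost_le f E hfc hfpos v
    calc stepCost f E v + stepCost f E v * ((1 - w) / f w)
        ≤ f w + f w * ((1 - w) / f w) := by
          gcongr
          exact rate_nonneg hfpos hw
      _ = f w + (1 - w) := by rw [mul_div_cancel₀ _ hfw.ne']
  calc ∑ u, charge f E v u + ∑ u, charge f E u v
      ≤ 1 + f (1 - (1 - w)) + ∫ t in (1 - w)..1, (1 - t) / f t := by
        rw [sub_sub_cancel]
        linarith
    _ ≤ _ := le_ciSup (bddAbove_range_ratio hfc hfpos) ⟨1 - w, h1w⟩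

end Dual

/-- General competitiveness of `GreedyAllocation(f)` for online fractional
vertex cover on an arbitrary finite simple graph with an arbitrary arrival
order: the final potentials form a fractional vertex cover of total size at
most `β = sup_{z∈[0,1]} (1 + f(1-z) + ∫_z^1 (1-t)/f t dt)` times the size of
any fractional vertex cover. -/
theorem greedyAllocation_competitive (f : ℝ → ℝ)
    (hfc : ContinuousOn f (Set.Icc 0 1))
    (hfpos : ∀ t ∈ Set.Icc (0:ℝ) 1, 0 < f t)
    (hmono : ∀ s ∈ Set.Icc (0:ℝ) 1, ∀ t ∈ Set.Icc (0:ℝ) 1,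
      s ≤ t → (1 - t) / f t ≤ (1 - s) / f s)
    (β : ℝ)
    (hβ : β = ⨆ z : Set.Icc (0:ℝ) 1,
      (1 + f (1 - (z : ℝ)) + ∫ t in (z : ℝ)..1, (1 - t) / f t))
    (n : ℕ) (E : Fin n → Fin n → Bool)
    (hsymm : ∀ i j, E i j = E j i) (hloop : ∀ i, E i i = false)
    (y : Fin n → ℝ) (hy : y = greedyPotential f E n) :
    (∀ v, y v ∈ Set.Icc (0:ℝ) 1) ∧
    (∀ i j, E i j = true → 1 ≤ y i + y j) ∧
    (∀ ystar : Fin n → ℝ, (∀ v, ystar v ∈ Set.Icc (0:ℝ) 1) →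
      (∀ i j, E i j = true → 1 ≤ ystar i + ystar j) →
      ∑ v, y v ≤ β * ∑ v, ystar v) := by
  subst hy hβ
  refine ⟨greedyPotential_mem_Icc f E n,
    fun i j hij => one_le_greedyPotential_add f E hsymm hloop hij, fun ystar hstar hcover => ?_⟩
  calc ∑ v, greedyPotential f E n v ≤ ∑ j, ∑ i, charge f E j i :=
        sum_greedyPotential_le_sum_charge f E hfc hfpos
    _ ≤ _ := sum_sum_le_mul_sum_of_cover (charge_nonneg f E hfpos) (fun v => (hstar v).1)
        (fun j i h => hcover j i (adj_of_charge_ne_zero f E h))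
        (charge_load_le hfc hfpos E hmono)
end
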